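/- If x is a random variable uniform on {0,1} and a prediction algorithm outputs, with probability 1, the point mass on the wrong value (i.e. Q assigns probability 0 to the true value of x), then the apparent Shannon information J(x;Q) = E[log(Q(x)/P(x))] equals −∞, even though the mutual information between the algorithm's output and x equals log 2. -/
import Mathlib


open MeasureTheory Real

/-- The expectation, in `EReal`, of an extended-real-valued score `j`
(which never takes the value `⊤`), with the convention that the expectation is
`−∞` whenever the negative part has infinite integral. -/
noncomputable def ErealExpectation {Ω : Type*} [MeasurableSpace Ω]
    (μ : Measure Ω) (j : Ω → EReal) : EReal :=
  let epos := ∫⁻ ω, ENNReal.ofReal ((j ω).toReal) ∂μ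
  let eneg := ∫⁻ ω, (if j ω = ⊥ then (⊤ : ENNReal) else ENNReal.ofReal (-(j ω).toReal)) ∂μ
  if eneg = ⊤ then ⊥ else if epos = ⊤ then ⊤ else ((epos.toReal - eneg.toReal : ℝ) : EReal)

/-- If `x` is uniform on `{0,1}` (here `Bool`) and the prediction algorithm
outputs with probability 1 the point mass on the *wrong* value, then the
apparent Shannon information `J(x;Q) = E[log(Q({x})/P({x}))]` equals `−∞`
(with the convention `log 0 = −∞`), even though the mutual information between
the algorithm's output and `x` equals `log 2`. -/
theorem wrong_pointmass_ASI_neg_infty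
    {Ω : Type*} [MeasurableSpace Ω]
    (μ : Measure Ω) [IsProbabilityMeasure μ]
    (Xv : Ω → Bool) (hXm : Measurable Xv)
    (huniform : μ {ω | Xv ω = true} = 1/2)
    -- the algorithm's output given true value `v` is the point mass on the wrong value `!v`
    (Q : Bool → Bool → ℝ) (hQ : ∀ v b, Q v b = if b = v then 0 else 1)
    -- the log score with the convention `log 0 = −∞`
    (j : Ω → EReal)
    (hj : ∀ ω, j ω = if Q (Xv ω) (Xv ω) = 0 then (⊥ : EReal)
      else ((log (Q (Xv ω) (Xv ω) / (1/2 : ℝ)) : ℝ) : EReal)) :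
    ErealExpectation μ j = ⊥ ∧
    -- mutual information between the algorithm's output (the point mass on `!x`) and `x`
    (∑ a : Bool, ∑ b : Bool,
        (μ {ω | Xv ω = a ∧ (!(Xv ω)) = b}).toReal *
          log ((μ {ω | Xv ω = a ∧ (!(Xv ω)) = b}).toReal /
            ((μ {ω | Xv ω = a}).toReal * (μ {ω | (!(Xv ω)) = b}).toReal)))
      = log 2 := by
  have hjbot : ∀ ω, j ω = ⊥ := by
    intro ω; rw [hj ω]; simp [hQ]
  have hf : μ {ω | Xv ω = false} = 1/2 := by
    have hc : {ω | Xv ω = false} = {ω | Xv ω = true}ᶜ := by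
      ext ω; simp
    rw [hc, measure_compl (s := {ω | Xv ω = true}) (hXm (measurableSet_singleton true))
      (measure_ne_top μ _), measure_univ, huniform]
    exact ENNReal.sub_half ENNReal.one_ne_top
  constructor
  · unfold ErealExpectation
    simp only [hjbot, if_true]
    rw [lintegral_const]
    simp
  · have e1 : {ω | Xv ω = true ∧ (!(Xv ω)) = true} = (∅ : Set Ω) := by
      ext ω; cases h : Xv ω <;> simp [h]
    have e2 : {ω | Xv ω = true ∧ (!(Xv ω)) = false} = {ω | Xv ω = true} := by
      ext ω; cases h : Xv ω <;> simp [h]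
    have e3 : {ω | Xv ω = false ∧ (!(Xv ω)) = true} = {ω | Xv ω = false} := by
      ext ω; cases h : Xv ω <;> simp [h]
    have e4 : {ω | Xv ω = false ∧ (!(Xv ω)) = false} = (∅ : Set Ω) := by
      ext ω; cases h : Xv ω <;> simp [h]
    have f1 : {ω | (!(Xv ω)) = true} = {ω | Xv ω = false} := by ext ω; simp
    have f2 : {ω | (!(Xv ω)) = false} = {ω | Xv ω = true} := by ext ω; simp
    rw [Fintype.sum_bool]
    rw [Fintype.sum_bool, Fintype.sum_bool]
    rw [e1, e2, e3, e4, f1, f2, huniform, hf]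
    have ht : ((1/2 : ENNReal)).toReal = (1/2 : ℝ) := by
      simp [ENNReal.toReal_div]
    rw [ht]
    have h2 : (1/2 : ℝ) / ((1/2 : ℝ) * (1/2 : ℝ)) = 2 := by norm_num
    simp [h2]
    ring
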